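/- Let ∂ : 𝔽₂^m → 𝔽₂^r be a surjective 𝔽₂-linear map with m ≥ 1 whose kernel contains the all-ones vector 𝟙 ≠ 0. Define the sandwich complex W by W₁ = 𝔽₂^m, W₀ = 𝔽₂^m ⊕ 𝔽₂^m ⊕ 𝔽₂^r, W₋₁ = 𝔽₂^r ⊕ 𝔽₂^r, ∂₀^W(x) = (x, x, ∂x), ∂₋₁^W(a, b, c) = (∂a + c, ∂b + c). Then ∂₋₁^W ∘ ∂₀^W = 0, and dim H₀(W) = dim(ker ∂₋₁^W / im ∂₀^W) = dim ker ∂ ≥ 1. -/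
import Mathlib


/-!
STATEMENT 10: For a surjective 𝔽₂-linear map ∂ : 𝔽₂^m → 𝔽₂^r (m ≥ 1) whose
kernel contains the all-ones vector 𝟙 ≠ 0, the sandwich complex W with
∂₀^W(x) = (x, x, ∂x) and ∂₋₁^W(a,b,c) = (∂a + c, ∂b + c) satisfies
∂₋₁^W ∘ ∂₀^W = 0 and dim H₀(W) = dim ker ∂ ≥ 1.
-/

abbrev F2 := ZMod 2

/-- The degree-0 differential of the sandwich complex: x ↦ (x, x, ∂x). -/
noncomputable def sandwichD0 (m r : ℕ) (d : (Fin m → F2) →ₗ[F2] (Fin r → F2)) :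
    (Fin m → F2) →ₗ[F2] ((Fin m → F2) × ((Fin m → F2) × (Fin r → F2))) :=
  LinearMap.id.prod (LinearMap.id.prod d)

/-- The degree-(-1) differential of the sandwich complex:
(a, b, c) ↦ (∂a + c, ∂b + c). -/
noncomputable def sandwichDm (m r : ℕ) (d : (Fin m → F2) →ₗ[F2] (Fin r → F2)) :
    ((Fin m → F2) × ((Fin m → F2) × (Fin r → F2))) →ₗ[F2]
      ((Fin r → F2) × (Fin r → F2)) :=
  ((d ∘ₗ LinearMap.fst F2 (Fin m → F2) ((Fin m → F2) × (Fin r → F2))) +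
      ((LinearMap.snd F2 (Fin m → F2) (Fin r → F2)) ∘ₗ
        (LinearMap.snd F2 (Fin m → F2) ((Fin m → F2) × (Fin r → F2))))).prod
    ((d ∘ₗ ((LinearMap.fst F2 (Fin m → F2) (Fin r → F2)) ∘ₗ
        (LinearMap.snd F2 (Fin m → F2) ((Fin m → F2) × (Fin r → F2))))) +
      ((LinearMap.snd F2 (Fin m → F2) (Fin r → F2)) ∘ₗ
        (LinearMap.snd F2 (Fin m → F2) ((Fin m → F2) × (Fin r → F2)))))


@[simp] lemma F2.add_self' {M : Type*} [AddCommGroup M] [Module F2 M] (x : M) :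
    x + x = 0 := by
  rw [← two_smul F2, show (2 : F2) = 0 from rfl, zero_smul]

section Aux

variable (m r : ℕ) (d : (Fin m → F2) →ₗ[F2] (Fin r → F2))

lemma mem_ker_sandwichDm (x : (Fin m → F2) × ((Fin m → F2) × (Fin r → F2))) :
    x ∈ LinearMap.ker (sandwichDm m r d) ↔
      d x.1 + x.2.2 = 0 ∧ d x.2.1 + x.2.2 = 0 := by
  simp [sandwichDm, LinearMap.mem_ker, Prod.ext_iff]

/-- forward map : (a,b,c) ↦ (a, a+b) -/
noncomputable def kerToProd :
    LinearMap.ker (sandwichDm m r d) →ₗ[F2] (Fin m → F2) × LinearMap.ker d :=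
  ((LinearMap.fst F2 (Fin m → F2) ((Fin m → F2) × (Fin r → F2))) ∘ₗ
      (LinearMap.ker (sandwichDm m r d)).subtype).prod
    (LinearMap.codRestrict (LinearMap.ker d)
      (((LinearMap.fst F2 (Fin m → F2) ((Fin m → F2) × (Fin r → F2))) +
          (LinearMap.fst F2 (Fin m → F2) (Fin r → F2)) ∘ₗ
            (LinearMap.snd F2 (Fin m → F2) ((Fin m → F2) × (Fin r → F2)))) ∘ₗ
        (LinearMap.ker (sandwichDm m r d)).subtype)
      (by
        rintro ⟨⟨a, b, c⟩, hx⟩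
        obtain ⟨h1, h2⟩ := (mem_ker_sandwichDm m r d _).1 hx
        simp only at h1 h2
        simp only [LinearMap.mem_ker, LinearMap.coe_comp, Function.comp_apply,
          Submodule.coe_subtype, LinearMap.add_apply, LinearMap.fst_apply,
          LinearMap.snd_apply, map_add]
        rw [show d a + d b = (d a + c) + (d b + c) by
            rw [show (d a + c) + (d b + c) = d a + d b + (c + c) by abel,
              F2.add_self', add_zero],
          h1, h2, add_zero]))

/-- backward map : (a,k) ↦ (a, a+k, d a) -/
noncomputable def prodToKer :
    ((Fin m → F2) × LinearMap.ker d) →ₗ[F2] LinearMap.ker (sandwichDm m r d) :=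
  LinearMap.codRestrict (LinearMap.ker (sandwichDm m r d))
    ((LinearMap.fst F2 (Fin m → F2) (LinearMap.ker d)).prod
      (((LinearMap.fst F2 (Fin m → F2) (LinearMap.ker d)) +
          (LinearMap.ker d).subtype ∘ₗ
            (LinearMap.snd F2 (Fin m → F2) (LinearMap.ker d))).prod
        (d ∘ₗ LinearMap.fst F2 (Fin m → F2) (LinearMap.ker d))))
    (by
      rintro ⟨a, k, hk⟩
      rw [LinearMap.mem_ker] at hk
      rw [mem_ker_sandwichDm]
      constructor
      · simp
      · simp [hk])

lemma prodToKer_kerToProd :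
    (prodToKer m r d) ∘ₗ (kerToProd m r d) = LinearMap.id := by
  apply LinearMap.ext
  rintro ⟨⟨a, b, c⟩, hx⟩
  obtain ⟨h1, h2⟩ := (mem_ker_sandwichDm m r d _).1 hx
  simp only at h1 h2
  apply Subtype.ext
  have hc : d a = c := by
    have h3 := congrArg (· + c) h1
    simpa [add_assoc] using h3
  simp only [prodToKer, kerToProd, LinearMap.coe_comp, Function.comp_apply,
    LinearMap.codRestrict_apply, LinearMap.prod_apply, Pi.prod,
    LinearMap.add_apply, LinearMap.id_coe, id_eq, Submodule.coe_subtype,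
    LinearMap.fst_apply, LinearMap.snd_apply]
  refine Prod.ext rfl (Prod.ext ?_ (by first | exact hc | exact hc.symm))
  show a + (a + b) = b
  rw [← add_assoc, F2.add_self', zero_add]

lemma kerToProd_prodToKer :
    (kerToProd m r d) ∘ₗ (prodToKer m r d) = LinearMap.id := by
  apply LinearMap.ext
  rintro ⟨a, k, hk⟩
  simp only [kerToProd, prodToKer, LinearMap.coe_comp, Function.comp_apply,
    LinearMap.codRestrict_apply, LinearMap.prod_apply, Pi.prod,
    LinearMap.add_apply, LinearMap.id_coe, id_eq, Submodule.coe_subtype,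
    LinearMap.fst_apply, LinearMap.snd_apply]
  refine Prod.ext rfl (Subtype.ext ?_)
  show a + (a + k) = k
  rw [← add_assoc, F2.add_self', zero_add]

/-- ker ∂₋₁ ≃ 𝔽₂^m × ker ∂. -/
noncomputable def kerEquiv :
    LinearMap.ker (sandwichDm m r d) ≃ₗ[F2] (Fin m → F2) × LinearMap.ker d :=
  LinearEquiv.ofLinear (kerToProd m r d) (prodToKer m r d)
    (kerToProd_prodToKer m r d) (prodToKer_kerToProd m r d)

end Aux

set_option maxHeartbeats 1000000 in
set_option synthInstance.maxHeartbeats 200000 in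
theorem sandwich_complex_homology
    (m r : ℕ) (hm : 1 ≤ m)
    (d : (Fin m → F2) →ₗ[F2] (Fin r → F2))
    (hsurj : Function.Surjective d)
    (hone_ker : (1 : Fin m → F2) ∈ LinearMap.ker d)
    (hone_ne : (1 : Fin m → F2) ≠ 0) :
    sandwichDm m r d ∘ₗ sandwichD0 m r d = 0 ∧
    Module.finrank F2
        (LinearMap.ker (sandwichDm m r d) ⧸
          ((LinearMap.range (sandwichD0 m r d)).comap
            (LinearMap.ker (sandwichDm m r d)).subtype :
            Submodule F2 (LinearMap.ker (sandwichDm m r d)))) =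
      Module.finrank F2 (LinearMap.ker d) ∧
    1 ≤ Module.finrank F2 (LinearMap.ker d) := by
  have hcomp : sandwichDm m r d ∘ₗ sandwichD0 m r d = 0 := by
    apply LinearMap.ext
    intro x
    simp [sandwichDm, sandwichD0, Prod.ext_iff]
  have hle : LinearMap.range (sandwichD0 m r d) ≤ LinearMap.ker (sandwichDm m r d) := by
    rintro _ ⟨x, rfl⟩
    rw [LinearMap.mem_ker, ← LinearMap.comp_apply, hcomp, LinearMap.zero_apply]
  have hS : Module.finrank F2
      ((LinearMap.range (sandwichD0 m r d)).comap
        (LinearMap.ker (sandwichDm m r d)).subtype :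
        Submodule F2 (LinearMap.ker (sandwichDm m r d))) = m := by
    rw [(Submodule.comapSubtypeEquivOfLe hle).finrank_eq]
    have hinj : Function.Injective (sandwichD0 m r d) := by
      intro x y h
      simpa [sandwichD0, Prod.ext_iff] using congrArg Prod.fst h
    rw [LinearMap.finrank_range_of_inj hinj, Module.finrank_pi, Fintype.card_fin]
  have hker : Module.finrank F2 (LinearMap.ker (sandwichDm m r d)) =
      m + Module.finrank F2 (LinearMap.ker d) := by
    rw [(kerEquiv m r d).finrank_eq, Module.finrank_prod, Module.finrank_pi, Fintype.card_fin]
  have hq := Submodule.finrank_quotient_add_finrank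
    ((LinearMap.range (sandwichD0 m r d)).comap
      (LinearMap.ker (sandwichDm m r d)).subtype :
      Submodule F2 (LinearMap.ker (sandwichDm m r d)))
  have hpos : 1 ≤ Module.finrank F2 (LinearMap.ker d) := by
    have : Nontrivial (LinearMap.ker d) :=
      ⟨⟨1, hone_ker⟩, 0, by simpa [Subtype.ext_iff] using hone_ne⟩
    exact Module.finrank_pos
  exact ⟨hcomp, by omega, hpos⟩
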